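/- Let R_1 be the Lie algebra with basis {x, e_1, e_2, ...} and nonzero brackets [e_i, e_1] = e_{i+1} (i ≥ 2), [e_1, x] = e_1, [e_i, x] = (i-2)e_i (i ≥ 2), together with the antisymmetric counterparts. Then the linear map d defined by d(x) = 0, d(e_1) = 0, d(e_i) = e_i for i ≥ 2 is a derivation of R_1 that is not inner, i.e., d ≠ ad_a for every a in R_1. -/
import Mathlib


noncomputable section

/-- The underlying space; coordinate 0 is `x`, coordinate `n ≥ 1` is `e_n`. -/
abbrev V : Type := ℕ →₀ ℂ

/-- `e_i ↦ e_{i+1}` for `i ≥ 2`, all other basis vectors to 0. -/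
def T : V →ₗ[ℂ] V :=
  Finsupp.lsum ℂ fun n => if 2 ≤ n then (Finsupp.lsingle (n + 1) : ℂ →ₗ[ℂ] V) else 0

/-- Right multiplication by `x`: `e_1 ↦ e_1`, `e_i ↦ (i-2) e_i` for `i ≥ 2`, `x ↦ 0`. -/
def A : V →ₗ[ℂ] V :=
  Finsupp.lsum ℂ fun n =>
    (if n = 1 then (1 : ℂ) else if 2 ≤ n then (n : ℂ) - 2 else 0) • Finsupp.lsingle n

/-- The Lie bracket of `R₁ = R₁(m₀,1,0)`: `[e_i,e_1] = e_{i+1}` (i ≥ 2), `[e_1,x] = e_1`,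
`[e_i,x] = (i-2) e_i` (i ≥ 2), with antisymmetric counterparts. -/
def brR1 (f g : V) : V := g 1 • T f - f 1 • T g + g 0 • A f - f 0 • A g

/-- `d(x) = d(e_1) = 0`, `d(e_i) = e_i` for `i ≥ 2`. -/
def d12 : V →ₗ[ℂ] V :=
  Finsupp.lsum ℂ fun n => if 2 ≤ n then (Finsupp.lsingle n : ℂ →ₗ[ℂ] V) else 0

lemma d12_low (u : V) (k : ℕ) (hk : k < 2) : d12 u k = 0 := by
  have h : (Finsupp.lapply k : V →ₗ[ℂ] ℂ).comp d12 = 0 := by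
    apply Finsupp.lhom_ext
    intro n c
    simp only [LinearMap.comp_apply, d12, Finsupp.lsum_single, LinearMap.zero_apply]
    split_ifs with h
    · exact Finsupp.single_eq_of_ne (by omega)
    · simp
  exact congrFun (congrArg (fun f => (f : V → ℂ)) (congrArg DFunLike.coe h)) u

lemma d12_T : d12 ∘ₗ T = T ∘ₗ d12 := by
  apply Finsupp.lhom_ext
  intro n c
  simp only [LinearMap.comp_apply, T, d12, Finsupp.lsum_single]
  split_ifs with h
  · simp [Finsupp.lsum_single, (by omega : 2 ≤ n + 1), h]
  · simp

lemma d12_A : d12 ∘ₗ A = A ∘ₗ d12 := by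
  apply Finsupp.lhom_ext
  intro n c
  simp only [LinearMap.comp_apply, A, d12, Finsupp.lsum_single, LinearMap.smul_apply,
    Finsupp.lsingle_apply, map_smul]
  by_cases h1 : 2 ≤ n
  · have hn1 : n ≠ 1 := by omega
    simp only [Finsupp.lsingle_apply, Finsupp.lsum_single, LinearMap.smul_apply, if_neg hn1,
      if_pos h1]
  · by_cases h2 : n = 1
    · subst h2
      rw [if_pos rfl, if_neg (by norm_num : ¬ (2:ℕ) ≤ 1)]
      simp
    · rw [if_neg h2, if_neg h1, if_neg h1]
      simp

/-- `d12` is a derivation of `R₁` which is not inner. -/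
theorem stmt12 :
    (∀ u v : V, d12 (brR1 u v) = brR1 (d12 u) v + brR1 u (d12 v)) ∧
    ¬ ∃ a : V, ∀ v : V, d12 v = brR1 a v := by
  constructor
  · intro u v
    have hT := fun w => congrFun (congrArg (DFunLike.coe) d12_T) w
    have hA := fun w => congrFun (congrArg (DFunLike.coe) d12_A) w
    simp only [LinearMap.comp_apply] at hT hA
    simp only [brR1, map_add, map_sub, map_smul, d12_low _ 0 (by norm_num),
      d12_low _ 1 (by norm_num), zero_smul, hT, hA]
    ring_nf
    module
  · rintro ⟨a, ha⟩
    have h := congrFun (congrArg (DFunLike.coe) (ha (Finsupp.single 2 1))) 2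
    simp only [brR1, d12, Finsupp.lsum_single] at h
    norm_num [T, A, Finsupp.lsum_single, Finsupp.single_apply] at h
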